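/- Pullback through a general unary function node (Theorem 5, reverse-mode chain rule in tensor form): let f be a function from tensors with index set s1 to tensors with index set s2, and let Y be a function from tensors with index set s2 to tensors with index set s3. Suppose f has derivative tensor f′(A) (index set s2s1) at the tensor A, and Y has derivative tensor f̄ (index set s3s2) at the point f(A). Then the composition A ↦ Y(f(A)) has derivative tensor f̄ *_{(s3s2, s2s1, s3s1)} f′(A) at A. -/

import Mathlib

open Filter

/-- A function `A` on full index assignments is a *tensor with index set `s`* if it only
depends on the values of the indices in `s`. -/
def TensorDependsOn {ι : Type*} (d : ι → ℕ) (s : Finset ι) (A : (∀ i, Fin (d i)) → ℝ) : Prop :=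
  ∀ a b : ∀ i, Fin (d i), (∀ i ∈ s, a i = b i) → A a = A b

/-- Generic tensor multiplication `A *_{(s1,s2,s3)} B`: the entry of the result at an
assignment `a` is the sum over all assignments of the indices in `(s1 ∪ s2) \ s3` of the
product of the corresponding entries of `A` and `B`. -/
noncomputable def tmul {ι : Type*} [Fintype ι] [DecidableEq ι] (d : ι → ℕ)
    (s1 s2 s3 : Finset ι) (A B : (∀ i, Fin (d i)) → ℝ) : (∀ i, Fin (d i)) → ℝ :=
  fun a => ∑ b : ∀ i, Fin (d i),
    if (∀ i, i ∉ (s1 ∪ s2) \ s3 → b i = a i) then A b * B b else 0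

/-- The Euclidean/Frobenius norm `√(∑_s A[s]²)` of a tensor with index set `s`:
the sum ranges over the assignments of the indices in `s` (indices outside `s` are
pinned to the value `0`). -/
noncomputable def tnorm {ι : Type*} [Fintype ι] [DecidableEq ι] (d : ι → ℕ)
    [∀ i, NeZero (d i)] (s : Finset ι) (A : (∀ i, Fin (d i)) → ℝ) : ℝ :=
  Real.sqrt (∑ a : ∀ i, Fin (d i), if (∀ i, i ∉ s → a i = 0) then A a ^ 2 else 0)

/-- Fréchet derivative (Definition 1): a function `f` from tensors with index set `sx` to
tensors with index set `sy` has derivative tensor `D` (with index set `sy ∪ sx`) at `x` if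
`‖f(x+h) − f(x) − D ∘ h‖ / ‖h‖ → 0` as the tensor `h` (with index set `sx`) tends to `0`,
where `D ∘ h = D *_{(sy sx, sx, sy)} h`. -/
noncomputable def HasDerivTensor {ι : Type*} [Fintype ι] [DecidableEq ι] (d : ι → ℕ)
    [∀ i, NeZero (d i)] (sx sy : Finset ι)
    (f : ((∀ i, Fin (d i)) → ℝ) → ((∀ i, Fin (d i)) → ℝ))
    (x D : (∀ i, Fin (d i)) → ℝ) : Prop :=
  Tendsto
    (fun h => tnorm d sy (f (x + h) - f x - tmul d (sy ∪ sx) sx sy D h) / tnorm d sx h)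
    (nhdsWithin 0 {h | TensorDependsOn d sx h ∧ h ≠ 0}) (nhds 0)

section Aux
set_option linter.unusedSectionVars false
variable {ι : Type*} [Fintype ι] [DecidableEq ι] (d : ι → ℕ) [∀ i, NeZero (d i)]

noncomputable def cmul (t : Finset ι) (D k : (∀ i, Fin (d i)) → ℝ) : (∀ i, Fin (d i)) → ℝ :=
  fun a => ∑ b : ∀ i, Fin (d i), if (∀ i, i ∉ t → b i = a i) then D b * k b else 0

lemma tmul_eq_cmul {s1 s2 s3 t : Finset ι} (ht : (s1 ∪ s2) \ s3 = t)
    (A B : (∀ i, Fin (d i)) → ℝ) : tmul d s1 s2 s3 A B = cmul d t A B := by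
  unfold tmul cmul; rw [ht]

noncomputable def toE (s : Finset ι) (A : (∀ i, Fin (d i)) → ℝ) :
    EuclideanSpace ℝ (∀ i, Fin (d i)) :=
  WithLp.toLp 2 (fun a => if (∀ i, i ∉ s → a i = 0) then A a else 0)

lemma tnorm_eq (s : Finset ι) (A : (∀ i, Fin (d i)) → ℝ) : tnorm d s A = ‖toE d s A‖ := by
  rw [EuclideanSpace.norm_eq]
  unfold tnorm toE
  congr 1
  refine Finset.sum_congr rfl fun a _ => ?_
  split_ifs with hc
  · simp only [PiLp.toLp_apply, if_pos hc, Real.norm_eq_abs, sq_abs]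
  · simp [Real.norm_eq_abs, sq_abs, *]

lemma tnorm_nonneg (s : Finset ι) (A : (∀ i, Fin (d i)) → ℝ) : 0 ≤ tnorm d s A :=
  Real.sqrt_nonneg _

lemma toE_sub (s : Finset ι) (A B : (∀ i, Fin (d i)) → ℝ) :
    toE d s (A - B) = toE d s A - toE d s B := by
  ext a
  simp only [toE, Pi.sub_apply, PiLp.sub_apply, PiLp.toLp_apply]
  split_ifs <;> simp

lemma toE_add (s : Finset ι) (A B : (∀ i, Fin (d i)) → ℝ) :
    toE d s (A + B) = toE d s A + toE d s B := by
  ext a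
  simp only [toE, Pi.add_apply, PiLp.add_apply, PiLp.toLp_apply]
  split_ifs <;> simp

lemma tnorm_add_le (s : Finset ι) (A B : (∀ i, Fin (d i)) → ℝ) :
    tnorm d s (A + B) ≤ tnorm d s A + tnorm d s B := by
  rw [tnorm_eq, tnorm_eq, tnorm_eq, toE_add]
  exact norm_add_le _ _

lemma abs_apply_le_tnorm {s : Finset ι} {A : (∀ i, Fin (d i)) → ℝ}
    (hA : TensorDependsOn d s A) (a : ∀ i, Fin (d i)) : |A a| ≤ tnorm d s A := by
  classical
  set a' : ∀ i, Fin (d i) := fun i => if i ∈ s then a i else 0 with ha'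
  have hAa : A a = A a' := hA a a' (fun i hi => by simp [ha', hi])
  have hp : (∀ i, i ∉ s → a' i = 0) := fun i hi => by simp [ha', hi]
  have h1 : A a' ^ 2 ≤ ∑ b : ∀ i, Fin (d i), if (∀ i, i ∉ s → b i = 0) then A b ^ 2 else 0 := by
    have := Finset.single_le_sum
      (f := fun b : ∀ i, Fin (d i) => if (∀ i, i ∉ s → b i = 0) then A b ^ 2 else 0)
      (s := Finset.univ) (fun b _ => by positivity) (Finset.mem_univ a')
    rwa [if_pos hp] at this
  calc |A a| = Real.sqrt (A a' ^ 2) := by rw [hAa, Real.sqrt_sq_eq_abs]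
    _ ≤ tnorm d s A := Real.sqrt_le_sqrt h1

lemma tnorm_pos {s : Finset ι} {A : (∀ i, Fin (d i)) → ℝ}
    (hA : TensorDependsOn d s A) (hne : A ≠ 0) : 0 < tnorm d s A := by
  obtain ⟨a, ha⟩ : ∃ a, A a ≠ 0 := by
    by_contra hc
    push_neg at hc
    exact hne (funext hc)
  calc (0:ℝ) < |A a| := abs_pos.mpr ha
    _ ≤ tnorm d s A := abs_apply_le_tnorm d hA a

lemma norm_le_tnorm {s : Finset ι} {A : (∀ i, Fin (d i)) → ℝ}
    (hA : TensorDependsOn d s A) : ‖A‖ ≤ tnorm d s A := by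
  rw [pi_norm_le_iff_of_nonneg (tnorm_nonneg d s A)]
  intro a
  simpa [Real.norm_eq_abs] using abs_apply_le_tnorm d hA a

lemma tnorm_le_of_forall_le {s : Finset ι} {A : (∀ i, Fin (d i)) → ℝ} {C : ℝ}
    (hC : 0 ≤ C) (h : ∀ a, |A a| ≤ C) :
    tnorm d s A ≤ Real.sqrt (Fintype.card (∀ i, Fin (d i))) * C := by
  rw [← Real.sqrt_sq hC, ← Real.sqrt_mul (by positivity)]
  apply Real.sqrt_le_sqrt
  calc (∑ a : ∀ i, Fin (d i), if (∀ i, i ∉ s → a i = 0) then A a ^ 2 else 0)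
      ≤ ∑ _a : ∀ i, Fin (d i), C ^ 2 := by
        refine Finset.sum_le_sum fun a _ => ?_
        split_ifs
        · exact sq_le_sq' (neg_le_of_neg_le (by linarith [abs_le.mp (h a)])) (abs_le.mp (h a)).2
        · positivity
    _ = (Fintype.card (∀ i, Fin (d i)) : ℝ) * C ^ 2 := by
        simp [Finset.sum_const, Finset.card_univ, nsmul_eq_mul]

lemma tnorm_le_norm (s : Finset ι) (A : (∀ i, Fin (d i)) → ℝ) :
    tnorm d s A ≤ Real.sqrt (Fintype.card (∀ i, Fin (d i))) * ‖A‖ :=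
  tnorm_le_of_forall_le d (norm_nonneg A) fun a => by
    simpa [Real.norm_eq_abs] using norm_le_pi_norm A a



lemma cmul_sub (t : Finset ι) (D k1 k2 : (∀ i, Fin (d i)) → ℝ) :
    cmul d t D (k1 - k2) = cmul d t D k1 - cmul d t D k2 := by
  funext a
  simp only [cmul, Pi.sub_apply, ← Finset.sum_sub_distrib]
  refine Finset.sum_congr rfl fun b _ => ?_
  split_ifs <;> ring

lemma cmul_zero (t : Finset ι) (D : (∀ i, Fin (d i)) → ℝ) : cmul d t D 0 = 0 := by
  funext a
  simp [cmul]

/-- Reindexing a constrained sum by translating the unconstrained coordinates. -/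
lemma sum_constrained_congr (t : Finset ι) (a a' : ∀ i, Fin (d i))
    (g g' : (∀ i, Fin (d i)) → ℝ)
    (hg : ∀ b : ∀ i, Fin (d i), (∀ i, i ∉ t → b i = a i) →
      g b = g' (fun i => if i ∈ t then b i else a' i)) :
    (∑ b : ∀ i, Fin (d i), if (∀ i, i ∉ t → b i = a i) then g b else 0)
      = ∑ b : ∀ i, Fin (d i), if (∀ i, i ∉ t → b i = a' i) then g' b else 0 := by
  classical
  set σ : (∀ i, Fin (d i)) ≃ (∀ i, Fin (d i)) :=
    Equiv.piCongrRight (fun i => Equiv.addRight (if i ∈ t then 0 else a' i - a i)) with hσ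
  refine Fintype.sum_equiv σ _ _ fun b => ?_
  have hσb : ∀ i, σ b i = b i + (if i ∈ t then 0 else a' i - a i) := fun i => rfl
  by_cases hcond : ∀ i, i ∉ t → b i = a i
  · have hcond' : ∀ i, i ∉ t → σ b i = a' i := by
      intro i hi
      rw [hσb i, if_neg hi, hcond i hi]
      abel
    rw [if_pos hcond, if_pos hcond', hg b hcond]
    congr 1
    funext i
    by_cases hi : i ∈ t
    · rw [if_pos hi, hσb i, if_pos hi, add_zero]
    · rw [if_neg hi, hσb i, if_neg hi, hcond i hi]
      abel
  · have hcond' : ¬ (∀ i, i ∉ t → σ b i = a' i) := by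
      intro hc
      apply hcond
      intro i hi
      have := hc i hi
      rw [hσb i, if_neg hi] at this
      have h2 : b i = a' i - (a' i - a i) := eq_sub_of_add_eq this
      rw [h2, sub_sub_cancel]
    rw [if_neg hcond, if_neg hcond']

lemma cmul_dependsOn {s' t : Finset ι} {D k : (∀ i, Fin (d i)) → ℝ}
    (hD : TensorDependsOn d (s' ∪ t) D) (hk : TensorDependsOn d t k) :
    TensorDependsOn d s' (cmul d t D k) := by
  intro a a' haa'
  simp only [cmul]
  refine sum_constrained_congr d t a a' _ _ fun b hb => ?_
  congr 1
  · apply hD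
    intro i hi
    by_cases hit : i ∈ t
    · rw [if_pos hit]
    · rw [if_neg hit, hb i hit]
      exact haa' i (by rcases Finset.mem_union.mp hi with h | h; exact h; exact absurd h hit)
  · apply hk
    intro i hi
    rw [if_pos hi]

lemma abs_cmul_le {t : Finset ι} {D k : (∀ i, Fin (d i)) → ℝ} {BD Bk : ℝ}
    (hBD : 0 ≤ BD) (hBk : 0 ≤ Bk)
    (hD : ∀ b, |D b| ≤ BD) (hk : ∀ b, |k b| ≤ Bk) (a : ∀ i, Fin (d i)) :
    |cmul d t D k a| ≤ (Fintype.card (∀ i, Fin (d i)) : ℝ) * (BD * Bk) := by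
  calc |cmul d t D k a| ≤ ∑ b : ∀ i, Fin (d i),
        |if (∀ i, i ∉ t → b i = a i) then D b * k b else 0| :=
      Finset.abs_sum_le_sum_abs _ _
    _ ≤ ∑ _b : ∀ i, Fin (d i), BD * Bk := by
        refine Finset.sum_le_sum fun b _ => ?_
        split_ifs
        · rw [abs_mul]
          exact mul_le_mul (hD b) (hk b) (abs_nonneg _) hBD
        · simp [mul_nonneg hBD hBk]
    _ = (Fintype.card (∀ i, Fin (d i)) : ℝ) * (BD * Bk) := by
        simp [Finset.sum_const, Finset.card_univ, nsmul_eq_mul]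

lemma tnorm_cmul_le {s' t : Finset ι} {D k : (∀ i, Fin (d i)) → ℝ} {BD : ℝ}
    (hBD : 0 ≤ BD) (hD : ∀ b, |D b| ≤ BD) (hk : TensorDependsOn d t k) :
    tnorm d s' (cmul d t D k) ≤
      (Real.sqrt (Fintype.card (∀ i, Fin (d i))) * ((Fintype.card (∀ i, Fin (d i)) : ℝ) * BD))
        * tnorm d t k := by
  have hBk : 0 ≤ tnorm d t k := tnorm_nonneg d t k
  have := tnorm_le_of_forall_le d (s := s')
    (A := cmul d t D k) (C := (Fintype.card (∀ i, Fin (d i)) : ℝ) * (BD * tnorm d t k))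
    (by positivity)
    (abs_cmul_le d hBD hBk hD (fun b => abs_apply_le_tnorm d hk b))
  calc tnorm d s' (cmul d t D k)
      ≤ Real.sqrt (Fintype.card (∀ i, Fin (d i))) *
        ((Fintype.card (∀ i, Fin (d i)) : ℝ) * (BD * tnorm d t k)) := this
    _ = (Real.sqrt (Fintype.card (∀ i, Fin (d i))) *
        ((Fintype.card (∀ i, Fin (d i)) : ℝ) * BD)) * tnorm d t k := by ring

set_option maxHeartbeats 1000000 in
lemma cmul_comm_assoc {s1 s2 s3 : Finset ι}
    (d12 : ∀ i, i ∈ s1 → i ∉ s2) (d13 : ∀ i, i ∈ s1 → i ∉ s3) (d23 : ∀ i, i ∈ s2 → i ∉ s3)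
    {fbar F h : (∀ i, Fin (d i)) → ℝ}
    (hfbar : TensorDependsOn d (s3 ∪ s2) fbar) (hF : TensorDependsOn d (s2 ∪ s1) F)
    (hh : TensorDependsOn d s1 h) :
    cmul d s2 fbar (cmul d s1 F h) = cmul d s1 (cmul d s2 fbar F) h := by
  classical
  funext a
  have flat1 : cmul d s2 fbar (cmul d s1 F h) a
      = ∑ b : ∀ i, Fin (d i), ∑ c : ∀ i, Fin (d i),
        if ((∀ i, i ∉ s2 → b i = a i) ∧ (∀ i, i ∉ s1 → c i = b i))
          then fbar b * (F c * h c) else 0 := by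
    simp only [cmul]
    refine Finset.sum_congr rfl fun b _ => ?_
    by_cases hb : ∀ i, i ∉ s2 → b i = a i
    · rw [if_pos hb, Finset.mul_sum]
      refine Finset.sum_congr rfl fun c _ => ?_
      rw [mul_ite, mul_zero]
      exact (if_congr (and_iff_right hb) rfl rfl).symm
    · rw [if_neg hb]
      rw [Finset.sum_eq_zero]
      intro c _
      rw [if_neg (fun hg => hb hg.1)]
  have flat2 : cmul d s1 (cmul d s2 fbar F) h a
      = ∑ c : ∀ i, Fin (d i), ∑ b : ∀ i, Fin (d i),
        if ((∀ i, i ∉ s1 → c i = a i) ∧ (∀ i, i ∉ s2 → b i = c i))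
          then fbar b * F b * h c else 0 := by
    simp only [cmul]
    refine Finset.sum_congr rfl fun c _ => ?_
    by_cases hc : ∀ i, i ∉ s1 → c i = a i
    · rw [if_pos hc, Finset.sum_mul]
      refine Finset.sum_congr rfl fun b _ => ?_
      rw [ite_mul, zero_mul]
      exact (if_congr (and_iff_right hc) rfl rfl).symm
    · rw [if_neg hc]
      rw [Finset.sum_eq_zero]
      intro b _
      rw [if_neg (fun hg => hc hg.1)]
  rw [flat1, flat2]
  set m2 : (∀ i, Fin (d i)) → (∀ i, Fin (d i)) :=
    fun b => fun i => if i ∈ s2 then a i - b i else 0 with hm2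
  set m1 : (∀ i, Fin (d i)) → (∀ i, Fin (d i)) :=
    fun c => fun i => if i ∈ s1 then c i - a i else 0 with hm1
  set e : ((∀ i, Fin (d i)) × (∀ i, Fin (d i))) ≃ ((∀ i, Fin (d i)) × (∀ i, Fin (d i))) :=
    (Equiv.prodShear (Equiv.refl _) (fun b => Equiv.addRight (m2 b))).trans
      ((Equiv.prodComm _ _).trans
        (Equiv.prodShear (Equiv.refl _) (fun c => Equiv.addRight (m1 c)))) with he
  have key : (∑ p : (∀ i, Fin (d i)) × (∀ i, Fin (d i)),
        (fun p : (∀ i, Fin (d i)) × (∀ i, Fin (d i)) =>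
          if ((∀ i, i ∉ s2 → p.1 i = a i) ∧ (∀ i, i ∉ s1 → p.2 i = p.1 i))
            then fbar p.1 * (F p.2 * h p.2) else 0) p)
      = ∑ q : (∀ i, Fin (d i)) × (∀ i, Fin (d i)),
        (fun q : (∀ i, Fin (d i)) × (∀ i, Fin (d i)) =>
          if ((∀ i, i ∉ s1 → q.1 i = a i) ∧ (∀ i, i ∉ s2 → q.2 i = q.1 i))
            then fbar q.2 * F q.2 * h q.1 else 0) q := by
    refine Fintype.sum_equiv e _ _ fun p => ?_
    obtain ⟨b, c⟩ := p
    simp only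
    have hep : e (b, c) = (c + m2 b, b + m1 (c + m2 b)) := rfl
    rw [hep]
    set c' : ∀ i, Fin (d i) := c + m2 b with hc'def
    set b' : ∀ i, Fin (d i) := b + m1 c' with hb'def
    have hc' : ∀ i, c' i = c i + (if i ∈ s2 then a i - b i else 0) := fun i => rfl
    have hb' : ∀ i, b' i = b i + (if i ∈ s1 then c' i - a i else 0) := fun i => rfl
    have hiff : ((∀ i, i ∉ s2 → b i = a i) ∧ (∀ i, i ∉ s1 → c i = b i))
        ↔ ((∀ i, i ∉ s1 → c' i = a i) ∧ (∀ i, i ∉ s2 → b' i = c' i)) := by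
      constructor
      · rintro ⟨H1, H2⟩
        constructor
        · intro i hi1
          rw [hc' i]
          by_cases hi2 : i ∈ s2
          · rw [if_pos hi2, H2 i hi1, add_sub_cancel]
          · rw [if_neg hi2, add_zero, H2 i hi1, H1 i hi2]
        · intro i hi2
          rw [hb' i]
          by_cases hi1 : i ∈ s1
          · rw [if_pos hi1, H1 i hi2, add_sub_cancel]
          · rw [if_neg hi1, add_zero, hc' i, if_neg hi2, add_zero, H2 i hi1]
      · rintro ⟨G1, G2⟩
        constructor
        · intro i hi2
          by_cases hi1 : i ∈ s1
          · have hG := G2 i hi2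
            rw [hb' i, if_pos hi1] at hG
            have h2 := eq_sub_of_add_eq hG
            rwa [sub_sub_cancel] at h2
          · have hG := G2 i hi2
            rw [hb' i, if_neg hi1, add_zero] at hG
            rw [hG]
            exact G1 i hi1
        · intro i hi1
          by_cases hi2 : i ∈ s2
          · have hG1 := G1 i hi1
            rw [hc' i, if_pos hi2] at hG1
            have h2 := eq_sub_of_add_eq hG1
            rwa [sub_sub_cancel] at h2
          · have hG1 := G1 i hi1
            rw [hc' i, if_neg hi2, add_zero] at hG1
            have hG2 := G2 i hi2
            rw [hb' i, if_neg hi1, add_zero, hc' i, if_neg hi2, add_zero] at hG2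
            exact hG2.symm
    by_cases hcond : (∀ i, i ∉ s2 → b i = a i) ∧ (∀ i, i ∉ s1 → c i = b i)
    · rw [if_pos hcond, if_pos (hiff.mp hcond)]
      obtain ⟨H1, H2⟩ := hcond
      have hhc : h c' = h c := by
        apply hh
        intro i hi
        rw [hc' i, if_neg (d12 i hi), add_zero]
      have hfb : fbar b' = fbar b := by
        apply hfbar
        intro i hi
        have hi1 : i ∉ s1 := by
          rcases Finset.mem_union.mp hi with h3 | h2
          · intro hs1; exact d13 i hs1 h3
          · intro hs1; exact d12 i hs1 h2
        rw [hb' i, if_neg hi1, add_zero]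
      have hFb : F b' = F c := by
        apply hF
        intro i hi
        rcases Finset.mem_union.mp hi with h2 | h1
        · have hi1 : i ∉ s1 := fun hs1 => d12 i hs1 h2
          rw [hb' i, if_neg hi1, add_zero]
          exact (H2 i hi1).symm
        · have hi2 : i ∉ s2 := d12 i h1
          rw [hb' i, if_pos h1, hc' i, if_neg hi2, add_zero, H1 i hi2, add_sub_cancel]
      rw [hhc, hfb, hFb]
      ring
    · rw [if_neg hcond, if_neg (fun hg => hcond (hiff.mpr hg))]
  exact (Fintype.sum_prod_type (fun p : ((∀ i, Fin (d i)) × (∀ i, Fin (d i))) =>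
      if ((∀ i, i ∉ s2 → p.1 i = a i) ∧ (∀ i, i ∉ s1 → p.2 i = p.1 i))
        then fbar p.1 * (F p.2 * h p.2) else 0)).symm.trans
    (key.trans (Fintype.sum_prod_type (fun q : ((∀ i, Fin (d i)) × (∀ i, Fin (d i))) =>
      if ((∀ i, i ∉ s1 → q.1 i = a i) ∧ (∀ i, i ∉ s2 → q.2 i = q.1 i))
        then fbar q.2 * F q.2 * h q.1 else 0)))

lemma tnorm_zero (s : Finset ι) : tnorm d s (0 : (∀ i, Fin (d i)) → ℝ) = 0 := by
  simp [tnorm]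

lemma dependsOn_sub {s : Finset ι} {A B : (∀ i, Fin (d i)) → ℝ}
    (hA : TensorDependsOn d s A) (hB : TensorDependsOn d s B) : TensorDependsOn d s (A - B) :=
  fun a b hab => by simp only [Pi.sub_apply, hA a b hab, hB a b hab]

end Aux

set_option maxHeartbeats 1000000 in
/-- Pullback through a general unary function node (Theorem 5, reverse-mode chain rule):
let `f` map tensors with index set `s1` to tensors with index set `s2`, with derivative
tensor `F = f′(A)` at the tensor `A`, and let `Y` map tensors with index set `s2` to
tensors with index set `s3`, with derivative tensor `fbar` at `f(A)`. Then the composition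
`A ↦ Y(f(A))` has derivative tensor `fbar *_(s3s2, s2s1, s3s1) F` at `A`. -/
theorem pullback_unary {ι : Type*} [Fintype ι] [DecidableEq ι] (d : ι → ℕ)
    [∀ i, NeZero (d i)] (s1 s2 s3 : Finset ι)
    (h12 : s1 ∩ s2 = ∅) (h13 : s1 ∩ s3 = ∅) (h23 : s2 ∩ s3 = ∅)
    (f Y : ((∀ i, Fin (d i)) → ℝ) → ((∀ i, Fin (d i)) → ℝ))
    (A F fbar : (∀ i, Fin (d i)) → ℝ)
    (hA : TensorDependsOn d s1 A)
    (hf : ∀ z, TensorDependsOn d s2 (f z)) (hY : ∀ z, TensorDependsOn d s3 (Y z))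
    (hF : TensorDependsOn d (s2 ∪ s1) F) (hfbar : TensorDependsOn d (s3 ∪ s2) fbar)
    (hdf : HasDerivTensor d s1 s2 f A F)
    (hdY : HasDerivTensor d s2 s3 Y (f A) fbar) :
    HasDerivTensor d s1 s3 (fun A' => Y (f A')) A
      (tmul d (s3 ∪ s2) (s2 ∪ s1) (s3 ∪ s1) fbar F) := by
  classical
  have d12 : ∀ i, i ∈ s1 → i ∉ s2 := fun i hi1 hi2 =>
    Finset.eq_empty_iff_forall_notMem.mp h12 i (Finset.mem_inter.mpr ⟨hi1, hi2⟩)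
  have d13 : ∀ i, i ∈ s1 → i ∉ s3 := fun i hi1 hi3 =>
    Finset.eq_empty_iff_forall_notMem.mp h13 i (Finset.mem_inter.mpr ⟨hi1, hi3⟩)
  have d23 : ∀ i, i ∈ s2 → i ∉ s3 := fun i hi2 hi3 =>
    Finset.eq_empty_iff_forall_notMem.mp h23 i (Finset.mem_inter.mpr ⟨hi2, hi3⟩)
  have t1 : ((s2 ∪ s1) ∪ s1) \ s2 = s1 := by
    ext i; have := d12 i
    simp only [Finset.mem_sdiff, Finset.mem_union]
    tauto
  have t2 : ((s3 ∪ s2) ∪ s2) \ s3 = s2 := by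
    ext i; have := d23 i
    simp only [Finset.mem_sdiff, Finset.mem_union]
    tauto
  have t3 : ((s3 ∪ s1) ∪ s1) \ s3 = s1 := by
    ext i; have := d13 i
    simp only [Finset.mem_sdiff, Finset.mem_union]
    tauto
  have t4 : ((s3 ∪ s2) ∪ (s2 ∪ s1)) \ (s3 ∪ s1) = s2 := by
    ext i; have := d23 i; have := d12 i
    simp only [Finset.mem_sdiff, Finset.mem_union]
    tauto
  unfold HasDerivTensor at hdf hdY ⊢
  simp only [tmul_eq_cmul d t1] at hdf
  simp only [tmul_eq_cmul d t2] at hdY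
  simp only [tmul_eq_cmul d t4, tmul_eq_cmul d t3]
  rw [Metric.tendsto_nhdsWithin_nhds] at hdf hdY ⊢
  intro ε hε
  set NN : ℝ := Real.sqrt (Fintype.card (∀ i, Fin (d i))) with hNNdef
  set card : ℝ := (Fintype.card (∀ i, Fin (d i)) : ℝ) with hcarddef
  have hNN : 0 ≤ NN := Real.sqrt_nonneg _
  have hcard : 0 ≤ card := Nat.cast_nonneg _
  have hBf : 0 ≤ tnorm d (s2 ∪ s1) F := tnorm_nonneg d _ _
  have hBfb : 0 ≤ tnorm d (s3 ∪ s2) fbar := tnorm_nonneg d _ _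
  set C1 : ℝ := NN * (card * tnorm d (s2 ∪ s1) F) with hC1def
  set C2 : ℝ := NN * (card * tnorm d (s3 ∪ s2) fbar) with hC2def
  have hC1 : 0 ≤ C1 := mul_nonneg hNN (mul_nonneg hcard hBf)
  have hC2 : 0 ≤ C2 := mul_nonneg hNN (mul_nonneg hcard hBfb)
  have hL1 : ∀ u : (∀ i, Fin (d i)) → ℝ, TensorDependsOn d s1 u →
      tnorm d s2 (cmul d s1 F u) ≤ C1 * tnorm d s1 u := fun u hu =>
    tnorm_cmul_le d hBf (fun b => abs_apply_le_tnorm d hF b) hu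
  have hL2 : ∀ u : (∀ i, Fin (d i)) → ℝ, TensorDependsOn d s2 u →
      tnorm d s3 (cmul d s2 fbar u) ≤ C2 * tnorm d s2 u := fun u hu =>
    tnorm_cmul_le d hBfb (fun b => abs_apply_le_tnorm d hfbar b) hu
  set ε3 : ℝ := ε / (2 * (C1 + 2)) with hε3def
  set ε2 : ℝ := min 1 (ε / (2 * (C2 + 1))) with hε2def
  have hε3 : 0 < ε3 := by positivity
  have hε2 : 0 < ε2 := lt_min one_pos (by positivity)
  have hε2le1 : ε2 ≤ 1 := min_le_left _ _
  obtain ⟨δ2, hδ2pos, hδ2⟩ := hdY ε3 hε3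
  obtain ⟨δ1, hδ1pos, hδ1⟩ := hdf ε2 hε2
  refine ⟨min δ1 (δ2 / ((C1 + 1) * NN + 1)), lt_min hδ1pos (by positivity), ?_⟩
  intro h hhS hdist
  obtain ⟨hh1, hhne⟩ := hhS
  have hd1 : dist h 0 < δ1 := lt_of_lt_of_le hdist (min_le_left _ _)
  have hd2' : dist h 0 < δ2 / ((C1 + 1) * NN + 1) := lt_of_lt_of_le hdist (min_le_right _ _)
  have hn1pos : 0 < tnorm d s1 h := tnorm_pos d hh1 hhne
  -- consequence of hdf
  have hr0 := hδ1 ⟨hh1, hhne⟩ hd1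
  rw [Real.dist_eq, sub_zero,
    abs_of_nonneg (div_nonneg (tnorm_nonneg d _ _) (tnorm_nonneg d _ _))] at hr0
  have hnr : tnorm d s2 (f (A + h) - f A - cmul d s1 F h) < ε2 * tnorm d s1 h :=
    (div_lt_iff₀ hn1pos).mp hr0
  set r : (∀ i, Fin (d i)) → ℝ := f (A + h) - f A - cmul d s1 F h with hrdef
  set k : (∀ i, Fin (d i)) → ℝ := f (A + h) - f A with hkdef
  have hrdep : TensorDependsOn d s2 r :=
    dependsOn_sub d (dependsOn_sub d (hf _) (hf _))
      (cmul_dependsOn d hF hh1)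
  have hkdep : TensorDependsOn d s2 k := dependsOn_sub d (hf _) (hf _)
  have hkr : k = cmul d s1 F h + r := by rw [hrdef]; abel
  have hn1NN : tnorm d s1 h ≤ NN * dist h 0 := by
    rw [dist_zero_right]
    exact tnorm_le_norm d s1 h
  have hnk : tnorm d s2 k ≤ (C1 + 1) * tnorm d s1 h := by
    calc tnorm d s2 k ≤ tnorm d s2 (cmul d s1 F h) + tnorm d s2 r := by
          rw [hkr]; exact tnorm_add_le d _ _ _
      _ ≤ C1 * tnorm d s1 h + ε2 * tnorm d s1 h := add_le_add (hL1 h hh1) hnr.le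
      _ ≤ (C1 + 1) * tnorm d s1 h := by nlinarith [hn1pos, hε2le1, hε2]
  -- consequence of hdY
  have hbracket : tnorm d s3 (Y (f (A + h)) - Y (f A) - cmul d s2 fbar k)
      ≤ ε3 * tnorm d s2 k := by
    by_cases hk0 : k = 0
    · have hfeq : f (A + h) = f A := by
        have := hk0
        rw [hkdef] at this
        exact sub_eq_zero.mp this
      rw [hk0, hfeq, cmul_zero, sub_self, zero_sub, neg_zero, tnorm_zero, tnorm_zero, mul_zero]
    · have hkS : k ∈ {u : (∀ i, Fin (d i)) → ℝ | TensorDependsOn d s2 u ∧ u ≠ 0} := ⟨hkdep, hk0⟩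
      have hkdist : dist k 0 < δ2 := by
        have h1 : dist k 0 ≤ tnorm d s2 k := by
          rw [dist_zero_right]
          exact norm_le_tnorm d hkdep
        have h2 : tnorm d s2 k ≤ ((C1 + 1) * NN) * dist h 0 := by
          calc tnorm d s2 k ≤ (C1 + 1) * tnorm d s1 h := hnk
            _ ≤ (C1 + 1) * (NN * dist h 0) :=
                mul_le_mul_of_nonneg_left hn1NN (by linarith)
            _ = ((C1 + 1) * NN) * dist h 0 := by ring
        have hc : (0:ℝ) ≤ (C1 + 1) * NN := mul_nonneg (by linarith) hNN
        have h3 : ((C1 + 1) * NN) * dist h 0 ≤ ((C1 + 1) * NN) * (δ2 / ((C1 + 1) * NN + 1)) :=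
          mul_le_mul_of_nonneg_left hd2'.le hc
        have h4 : ((C1 + 1) * NN) * (δ2 / ((C1 + 1) * NN + 1)) < δ2 := by
          have hrw : ((C1 + 1) * NN) * (δ2 / ((C1 + 1) * NN + 1))
              = δ2 * (((C1 + 1) * NN) / ((C1 + 1) * NN + 1)) := by ring
          rw [hrw]
          have hlt : ((C1 + 1) * NN) / ((C1 + 1) * NN + 1) < 1 :=
            (div_lt_one (by linarith)).mpr (by linarith)
          calc δ2 * (((C1 + 1) * NN) / ((C1 + 1) * NN + 1)) < δ2 * 1 :=
              mul_lt_mul_of_pos_left hlt hδ2pos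
            _ = δ2 := mul_one _
        linarith
      have hY0 := hδ2 hkS hkdist
      rw [Real.dist_eq, sub_zero,
        abs_of_nonneg (div_nonneg (tnorm_nonneg d _ _) (tnorm_nonneg d _ _))] at hY0
      have hnkpos : 0 < tnorm d s2 k := tnorm_pos d hkdep hk0
      have := (div_lt_iff₀ hnkpos).mp hY0
      have hfAk : f A + k = f (A + h) := by rw [hkdef]; abel
      rw [hfAk] at this
      exact this.le
  -- decomposition
  have hsub : cmul d s2 fbar k - cmul d s2 fbar (cmul d s1 F h) = cmul d s2 fbar r := by
    rw [← cmul_sub]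
  have hsplit : Y (f (A + h)) - Y (f A) - cmul d s1 (cmul d s2 fbar F) h
      = (Y (f (A + h)) - Y (f A) - cmul d s2 fbar k) + cmul d s2 fbar r := by
    rw [← cmul_comm_assoc d d12 d13 d23 hfbar hF hh1, ← hsub]
    abel
  have hnum : tnorm d s3 (Y (f (A + h)) - Y (f A) - cmul d s1 (cmul d s2 fbar F) h)
      ≤ ε3 * tnorm d s2 k + C2 * tnorm d s2 r := by
    rw [hsplit]
    exact le_trans (tnorm_add_le d _ _ _) (add_le_add hbracket (hL2 r hrdep))
  have ha : ε3 * (C1 + 1) < ε / 2 := by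
    rw [hε3def, div_mul_eq_mul_div, div_lt_div_iff₀ (by positivity) (by norm_num : (0:ℝ) < 2)]
    nlinarith [hε, hC1]
  have hb : C2 * ε2 ≤ ε / 2 := by
    calc C2 * ε2 ≤ C2 * (ε / (2 * (C2 + 1))) :=
        mul_le_mul_of_nonneg_left (min_le_right _ _) hC2
      _ = (C2 * ε) / (2 * (C2 + 1)) := by ring
      _ ≤ ε / 2 := by
          rw [div_le_div_iff₀ (by positivity) (by norm_num : (0:ℝ) < 2)]
          nlinarith [hε, hC2]
  have hfinal : tnorm d s3 (Y (f (A + h)) - Y (f A) - cmul d s1 (cmul d s2 fbar F) h)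
      < ε * tnorm d s1 h := by
    have e1 : ε3 * tnorm d s2 k ≤ ε3 * ((C1 + 1) * tnorm d s1 h) :=
      mul_le_mul_of_nonneg_left hnk hε3.le
    have e2 : C2 * tnorm d s2 r ≤ C2 * (ε2 * tnorm d s1 h) :=
      mul_le_mul_of_nonneg_left hnr.le hC2
    have e3 : (ε3 * (C1 + 1) + C2 * ε2) * tnorm d s1 h < ε * tnorm d s1 h := by
      apply mul_lt_mul_of_pos_right _ hn1pos
      linarith
    calc tnorm d s3 (Y (f (A + h)) - Y (f A) - cmul d s1 (cmul d s2 fbar F) h)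
        ≤ ε3 * tnorm d s2 k + C2 * tnorm d s2 r := hnum
      _ ≤ ε3 * ((C1 + 1) * tnorm d s1 h) + C2 * (ε2 * tnorm d s1 h) := add_le_add e1 e2
      _ = (ε3 * (C1 + 1) + C2 * ε2) * tnorm d s1 h := by ring
      _ < ε * tnorm d s1 h := e3
  rw [Real.dist_eq, sub_zero,
    abs_of_nonneg (div_nonneg (tnorm_nonneg d _ _) (tnorm_nonneg d _ _))]
  exact (div_lt_iff₀ hn1pos).mpr hfinal
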